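/- arXiv:2411.08765 — 5 statements merged into one kernel-verified Lean document; each statement's English description precedes it below -/
import Mathlib

section
/- For every 2^n × 2^n Hermitian matrix H and every a ∈ 𝔽₂^{2n}, the symplectic Fourier transform of p_H satisfies p̂_H(a) = 4^{-n} · tr(W_a H W_a H). -/
open scoped BigOperators ComplexOrder

/-- The phase space `𝔽₂^{2n}`, written as pairs `(a, b)` with `a, b ∈ 𝔽₂ⁿ`. -/
abbrev PhaseSpace (n : ℕ) := (Fin n → ZMod 2) × (Fin n → ZMod 2)

/-- The symplectic product `[x, y] = a·d + b·c` for `x = (a,b)`, `y = (c,d)`. -/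
def sympl {n : ℕ} (x y : PhaseSpace n) : ZMod 2 :=
  ∑ i, x.1 i * y.2 i + ∑ i, x.2 i * y.1 i

/-- The symplectic Fourier transform `f̂(a) = 4^{-n} ∑_x (-1)^{[a,x]} f(x)`. -/
noncomputable def sft {n : ℕ} (f : PhaseSpace n → ℝ) (a : PhaseSpace n) : ℝ :=
  (1 / 4 ^ n) * ∑ x, (-1 : ℝ) ^ (sympl a x).val * f x

/-- The symplectic complement of a set `S ⊆ 𝔽₂^{2n}`. -/
def symplComplement {n : ℕ} (S : Set (PhaseSpace n)) : Set (PhaseSpace n) :=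
  {x | ∀ a ∈ S, sympl x a = 0}

/-- The Weyl operator `W_x = i^{a·b} X^a Z^b` for `x = (a,b)`, as a `2^n × 2^n` matrix
indexed by `𝔽₂ⁿ`: `(W_x)_{k,j} = i^{a·b} (-1)^{b·j} [k = j + a]`. -/
noncomputable def Weyl {n : ℕ} (x : PhaseSpace n) :
    Matrix (Fin n → ZMod 2) (Fin n → ZMod 2) ℂ :=
  fun k j => Complex.I ^ (∑ i, (x.1 i).val * (x.2 i).val) *
    (if k = j + x.1 then (-1 : ℂ) ^ (∑ i, (x.2 i).val * (j i).val) else 0)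

/-- `p_H(x) = 2^{-n} tr(W_x H)²` (the trace is real for Hermitian `H`). -/
noncomputable def pFun {n : ℕ} (H : Matrix (Fin n → ZMod 2) (Fin n → ZMod 2) ℂ)
    (x : PhaseSpace n) : ℝ :=
  ((Weyl x * H).trace.re) ^ 2 / 2 ^ n

/-!
Writing `x = (α, β)`, the trace `tr(W_x M)` is `i^{α·β} ∑_j (-1)^{β·j} M_{j, j+α}`, so the product
`tr(W_x M) tr(W_x N)` is a character sum in `β`. Weighting by `(-1)^{[a,x]}` and summing over `β`,
orthogonality of the characters of `𝔽₂ⁿ` pins the second row index to the first plus `α + a₁`, and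
what survives is `2ⁿ` times the entrywise expansion of `tr(W_a M W_a N)`; this holds for all `M, N`.
For Hermitian `H` the trace `tr(W_x H)` is real because `W_x` is Hermitian, so `p_H(x)` is
`2⁻ⁿ tr(W_x H)²` and the theorem is the case `M = N = H`.
-/

open Matrix Complex

def signChar : AddChar (ZMod 2) ℂ where
  toFun z := (-1) ^ z.val
  map_zero_eq_one' := by simp
  map_add_eq_mul' u v := by rw [← pow_add, ZMod.val_add, ← neg_one_pow_eq_pow_mod_two]

lemma signChar_apply (z : ZMod 2) : signChar z = (-1) ^ z.val := rfl

lemma signChar_natCast (m : ℕ) : signChar m = (-1) ^ m := by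
  rw [signChar_apply, ZMod.val_natCast, ← neg_one_pow_eq_pow_mod_two]

lemma signChar_eq_one_iff {z : ZMod 2} : signChar z = 1 ↔ z = 0 := by
  rw [signChar_apply, neg_one_pow_eq_one_iff_even (by norm_num), ← ZMod.val_eq_zero,
    Nat.even_iff]
  have := ZMod.val_lt z
  omega

lemma star_signChar (z : ZMod 2) : star (signChar z) = signChar z := by
  simp [signChar_apply]

lemma signChar_mul_self (z : ZMod 2) : signChar z * signChar z = 1 := by
  rw [← AddChar.map_add_eq_mul, ZModModule.add_self, AddChar.map_zero_eq_one]

lemma neg_one_pow_sum_val_mul_val {ι : Type*} [Fintype ι] (u v : ι → ZMod 2) :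
    (-1 : ℂ) ^ (∑ i, (u i).val * (v i).val) = signChar (u ⬝ᵥ v) := by
  rw [← signChar_natCast]
  push_cast [ZMod.natCast_val, ZMod.cast_id]
  rfl

lemma sum_signChar_dotProduct {ι : Type*} [Fintype ι] [DecidableEq ι] (c : ι → ZMod 2) :
    ∑ b, signChar (b ⬝ᵥ c) = if c = 0 then 2 ^ Fintype.card ι else 0 := by
  let ψ : AddChar (ι → ZMod 2) ℂ :=
    { toFun b := signChar (b ⬝ᵥ c)
      map_zero_eq_one' := by simp
      map_add_eq_mul' u v := by rw [add_dotProduct, AddChar.map_add_eq_mul] }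
  have hψ : ψ = 0 ↔ c = 0 := by
    refine ⟨fun h => funext fun i => ?_, fun h => DFunLike.ext _ _ fun b => by simp [ψ, h]⟩
    simpa [ψ, signChar_eq_one_iff] using DFunLike.congr_fun h (Pi.single i 1)
  change ∑ b, ψ b = _
  simp [AddChar.sum_eq_ite ψ, hψ]

lemma ZModModule.eq_add_iff_eq_add {G : Type*} [AddCommGroup G] [Module (ZMod 2) G] (a b c : G) :
    a = b + c ↔ b = a + c := by
  rw [← sub_eq_iff_eq_add, ZModModule.sub_eq_add, eq_comm]

lemma Matrix.IsHermitian.ofReal_re_trace_mul {ι : Type*} [Fintype ι] {A B : Matrix ι ι ℂ}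
    (hA : A.IsHermitian) (hB : B.IsHermitian) : ((A * B).trace.re : ℂ) = (A * B).trace := by
  rw [← conj_eq_iff_re, ← star_def, ← trace_conjTranspose, conjTranspose_mul, hA.eq, hB.eq,
    trace_mul_comm]

section Weyl

variable {n : ℕ}

def weylPhase (x : PhaseSpace n) : ℂ := I ^ ∑ i, (x.1 i).val * (x.2 i).val

lemma weylPhase_mul_self (x : PhaseSpace n) :
    weylPhase x * weylPhase x = signChar (x.1 ⬝ᵥ x.2) := by
  rw [weylPhase, ← mul_pow, I_mul_I, neg_one_pow_sum_val_mul_val]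

lemma star_weylPhase (x : PhaseSpace n) :
    star (weylPhase x) = signChar (x.1 ⬝ᵥ x.2) * weylPhase x := by
  rw [weylPhase, star_pow, star_def, conj_I, neg_pow, neg_one_pow_sum_val_mul_val]

lemma sympl_eq_dotProduct (x y : PhaseSpace n) : sympl x y = x.1 ⬝ᵥ y.2 + x.2 ⬝ᵥ y.1 :=
  rfl

lemma Weyl_apply (x : PhaseSpace n) (k j : Fin n → ZMod 2) :
    Weyl x k j = if k = j + x.1 then weylPhase x * signChar (x.2 ⬝ᵥ j) else 0 := by
  rw [Weyl, mul_ite, mul_zero, neg_one_pow_sum_val_mul_val, weylPhase]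

lemma isHermitian_Weyl (x : PhaseSpace n) : (Weyl x).IsHermitian := by
  ext k j
  simp only [conjTranspose_apply, Weyl_apply, ZModModule.eq_add_iff_eq_add j]
  split_ifs with h
  · subst h
    rw [star_mul, star_weylPhase, star_signChar, dotProduct_add, AddChar.map_add_eq_mul,
      dotProduct_comm x.2 x.1]
    linear_combination (weylPhase x * signChar (x.2 ⬝ᵥ j)) * signChar_mul_self (x.1 ⬝ᵥ x.2)
  · exact star_zero _

lemma Weyl_mul_apply (x : PhaseSpace n) (M : Matrix (Fin n → ZMod 2) (Fin n → ZMod 2) ℂ)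
    (p r : Fin n → ZMod 2) :
    (Weyl x * M) p r = weylPhase x * signChar (x.2 ⬝ᵥ (p + x.1)) * M (p + x.1) r := by
  simp only [mul_apply, Weyl_apply, ZModModule.eq_add_iff_eq_add p, ite_mul, zero_mul, Finset.sum_ite_eq',
    Finset.mem_univ, if_true]

lemma trace_Weyl_mul (x : PhaseSpace n) (M : Matrix (Fin n → ZMod 2) (Fin n → ZMod 2) ℂ) :
    (Weyl x * M).trace = weylPhase x * ∑ j, signChar (x.2 ⬝ᵥ j) * M j (j + x.1) := by
  rw [trace, ← Equiv.sum_comp (Equiv.addRight x.1), Finset.mul_sum]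
  simp only [diag_apply, Weyl_mul_apply, Equiv.coe_addRight, add_assoc, ZModModule.add_self,
    add_zero, mul_assoc]

lemma trace_Weyl_mul_mul_trace_Weyl_mul (x : PhaseSpace n)
    (M N : Matrix (Fin n → ZMod 2) (Fin n → ZMod 2) ℂ) :
    (Weyl x * M).trace * (Weyl x * N).trace =
      ∑ j, ∑ k, signChar (x.2 ⬝ᵥ (j + x.1 + k)) * (M j (j + x.1) * N k (k + x.1)) := by
  rw [trace_Weyl_mul, trace_Weyl_mul, mul_mul_mul_comm, weylPhase_mul_self, Finset.sum_mul_sum,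
    Finset.mul_sum]
  refine Finset.sum_congr rfl fun j _ => ?_
  rw [Finset.mul_sum]
  refine Finset.sum_congr rfl fun k _ => ?_
  rw [dotProduct_add, dotProduct_add, AddChar.map_add_eq_mul, AddChar.map_add_eq_mul,
    dotProduct_comm x.2 x.1]
  ring

lemma trace_Weyl_mul_Weyl_mul (a : PhaseSpace n)
    (M N : Matrix (Fin n → ZMod 2) (Fin n → ZMod 2) ℂ) :
    (Weyl a * M * Weyl a * N).trace =
      ∑ j, ∑ α, signChar (a.2 ⬝ᵥ α) * (M j (j + α) * N (j + α + a.1) (j + a.1)) := by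
  rw [Matrix.mul_assoc (Weyl a * M), trace, ← Equiv.sum_comp (Equiv.addRight a.1)]
  refine Finset.sum_congr rfl fun j _ => ?_
  rw [diag_apply, mul_apply, ← Equiv.sum_comp (Equiv.addLeft j)]
  refine Finset.sum_congr rfl fun α _ => ?_
  have hphase : weylPhase a * weylPhase a * signChar (a.2 ⬝ᵥ a.1) = 1 := by
    rw [weylPhase_mul_self, dotProduct_comm, signChar_mul_self]
  simp only [Weyl_mul_apply, Equiv.coe_addRight, Equiv.coe_addLeft, add_assoc,
    ZModModule.add_self, add_zero, dotProduct_add, AddChar.map_add_eq_mul]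
  calc _ = (weylPhase a * weylPhase a * signChar (a.2 ⬝ᵥ a.1)) *
        (signChar (a.2 ⬝ᵥ j) * signChar (a.2 ⬝ᵥ j)) *
        (signChar (a.2 ⬝ᵥ α) * (M j (j + α) * N (j + (α + a.1)) (j + a.1))) := by ring
    _ = _ := by rw [hphase, signChar_mul_self, one_mul, one_mul]

lemma sum_signChar_sympl_mul_trace_Weyl_mul (a : PhaseSpace n)
    (M N : Matrix (Fin n → ZMod 2) (Fin n → ZMod 2) ℂ) :
    ∑ x, signChar (sympl a x) * ((Weyl x * M).trace * (Weyl x * N).trace) =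
      2 ^ n * (Weyl a * M * Weyl a * N).trace := by
  have hβ : ∀ α, ∑ β, signChar (sympl a (α, β)) *
      ((Weyl (α, β) * M).trace * (Weyl (α, β) * N).trace) =
        2 ^ n * ∑ j, signChar (a.2 ⬝ᵥ α) * (M j (j + α) * N (j + α + a.1) (j + a.1)) := by
    intro α
    have hchar : ∀ β j k, signChar (sympl a (α, β)) * signChar (β ⬝ᵥ (j + α + k)) =
        signChar (a.2 ⬝ᵥ α) * signChar (β ⬝ᵥ (j + α + a.1 + k)) := fun β j k => by
      simp only [sympl_eq_dotProduct, dotProduct_add, AddChar.map_add_eq_mul, dotProduct_comm a.1]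
      ring
    have hshift : ∀ j, j + α + a.1 + α = j + a.1 := fun j => by
      rw [add_right_comm, add_assoc j α, ZModModule.add_self, add_zero]
    calc _ = ∑ β, ∑ j, ∑ k, signChar (a.2 ⬝ᵥ α) * signChar (β ⬝ᵥ (j + α + a.1 + k)) *
            (M j (j + α) * N k (k + α)) := by
          simp only [trace_Weyl_mul_mul_trace_Weyl_mul, Finset.mul_sum, ← mul_assoc, hchar]
      _ = ∑ j, ∑ k, signChar (a.2 ⬝ᵥ α) * (∑ β, signChar (β ⬝ᵥ (j + α + a.1 + k))) *
            (M j (j + α) * N k (k + α)) := by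
          rw [Finset.sum_comm]
          simp only [Finset.mul_sum, Finset.sum_mul]
          exact Finset.sum_congr rfl fun j _ => Finset.sum_comm
      _ = ∑ j, signChar (a.2 ⬝ᵥ α) * 2 ^ n * (M j (j + α) * N (j + α + a.1) (j + a.1)) := by
          simp only [sum_signChar_dotProduct, add_eq_zero_iff_neg_eq, ZModModule.neg_eq_self,
            Fintype.card_fin, mul_ite, mul_zero, ite_mul, zero_mul, Finset.sum_ite_eq,
            Finset.mem_univ, if_true, hshift]
      _ = _ := by
          rw [Finset.mul_sum]
          exact Finset.sum_congr rfl fun j _ => by ring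
  rw [Fintype.sum_prod_type, Finset.sum_congr rfl fun α _ => hβ α, ← Finset.mul_sum,
    Finset.sum_comm, trace_Weyl_mul_Weyl_mul]

end Weyl

/-- For every 2^n × 2^n Hermitian matrix H and every a ∈ 𝔽₂^{2n},
p̂_H(a) = 4^{-n} · tr(W_a H W_a H). -/
theorem sft_pFun_eq {n : ℕ} (H : Matrix (Fin n → ZMod 2) (Fin n → ZMod 2) ℂ)
    (hH : H.IsHermitian) (a : PhaseSpace n) :
    ((sft (pFun H) a : ℝ) : ℂ) = (1 / 4 ^ n) * (Weyl a * H * Weyl a * H).trace := by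
  have hreal : ∀ x : PhaseSpace n, ((Weyl x * H).trace.re : ℂ) = (Weyl x * H).trace :=
    fun x => (isHermitian_Weyl x).ofReal_re_trace_mul hH
  calc ((sft (pFun H) a : ℝ) : ℂ)
      = 1 / 4 ^ n * ((∑ x, signChar (sympl a x) *
          ((Weyl x * H).trace * (Weyl x * H).trace)) / 2 ^ n) := by
        simp only [sft, pFun, Finset.sum_div, signChar_apply]
        push_cast
        simp only [hreal, sq, mul_div_assoc]
    _ = _ := by
        rw [sum_signChar_sympl_mul_trace_Weyl_mul]
        field_simp
end

section
/- Let ρ be an n-qubit mixed state and let |φ⟩ be a stabilizer state with L = Weyl(|φ⟩⟨φ|). Then Σ_{x ∈ L} p_ρ(x) ≥ ⟨φ|ρ|φ⟩². -/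
open scoped BigOperators ComplexOrder

/-- A set is Lagrangian if it equals its symplectic complement. -/
def IsLagrangian {n : ℕ} (S : Set (PhaseSpace n)) : Prop :=
  S = symplComplement S

/-- The outer product `|φ⟩⟨φ|` of a vector `φ ∈ ℂ^{2^n}`. -/
noncomputable def outer {n : ℕ} (φ : (Fin n → ZMod 2) → ℂ) :
    Matrix (Fin n → ZMod 2) (Fin n → ZMod 2) ℂ :=
  Matrix.vecMulVec φ (fun j => starRingEnd ℂ (φ j))

/-- `Weyl(σ) = {x : tr(W_x σ) = ±1}`. -/
def weylSet {n : ℕ} (σ : Matrix (Fin n → ZMod 2) (Fin n → ZMod 2) ℂ) :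
    Set (PhaseSpace n) :=
  {x | (Weyl x * σ).trace = 1 ∨ (Weyl x * σ).trace = -1}

/-- A unit vector `φ` is a stabilizer state iff `Weyl(|φ⟩⟨φ|)` is Lagrangian. -/
def IsStabilizerState {n : ℕ} (φ : (Fin n → ZMod 2) → ℂ) : Prop :=
  (∑ j, Complex.normSq (φ j)) = 1 ∧ IsLagrangian (weylSet (outer φ))

/-- The stabilizer fidelity `F(ρ) = max_{stabilizer |φ⟩} ⟨φ|ρ|φ⟩ = max tr(ρ|φ⟩⟨φ|)`. -/
noncomputable def stabFidelity {n : ℕ}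
    (ρ : Matrix (Fin n → ZMod 2) (Fin n → ZMod 2) ℂ) : ℝ :=
  ⨆ φ : {φ : (Fin n → ZMod 2) → ℂ // IsStabilizerState φ}, ((ρ * outer φ.1).trace).re


/-!
For `s(x) = tr(W_x |φ⟩⟨φ|)`: if `W_y φ = ±φ` and `W_x` anticommutes with `W_y`, then
`s(x) = -s(x) = 0`. As `L = Weyl(|φ⟩⟨φ|)` is Lagrangian, every `x ∉ L` has `[x, y] = 1` for some
`y ∈ L`, so `s` is `±1` on `L` and `0` off `L`. The Weyl operators are orthogonal,
`∑_x tr(W_x A) · conj tr(W_x C) = 2ⁿ tr(A C†)`, which gives `∑ s² = 2ⁿ` and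
`∑ r s = 2ⁿ ⟨φ|ρ|φ⟩` for `r(x) = Re tr(W_x ρ)`. Cauchy–Schwarz over `L` then yields
`(2ⁿ ⟨φ|ρ|φ⟩)² ≤ (∑_{x ∈ L} r(x)²) · 2ⁿ = 4ⁿ ∑_{x ∈ L} p_ρ(x)`.
-/

open Matrix

lemma neg_one_pow_eq_of_natCast_eq {R : Type*} [Ring R] {m k : ℕ}
    (h : (m : ZMod 2) = k) : (-1 : R) ^ m = (-1) ^ k := by
  rw [neg_one_pow_eq_pow_mod_two, neg_one_pow_eq_pow_mod_two (n := k),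
    (ZMod.natCast_eq_natCast_iff' m k 2).mp h]

lemma natCast_sum_val_mul_val {n : ℕ} (u v : Fin n → ZMod 2) :
    ((∑ i, (u i).val * (v i).val : ℕ) : ZMod 2) = u ⬝ᵥ v := by
  simp [dotProduct]

lemma sum_neg_one_pow_mul_neg_one_pow {R : Type*} [CommRing R] {n : ℕ} (j k : Fin n → ZMod 2) :
    ∑ b : Fin n → ZMod 2,
        (-1 : R) ^ (∑ i, (b i).val * (j i).val) * (-1) ^ (∑ i, (b i).val * (k i).val)
      = if j = k then 2 ^ n else 0 := by
  have coord : ∀ u v : ZMod 2,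
      ∑ t : ZMod 2, (-1 : R) ^ (t.val * u.val) * (-1) ^ (t.val * v.val)
        = if u = v then 2 else 0 := by
    intro u v
    rw [show ∀ f : ZMod 2 → R, ∑ t, f t = f 0 + f 1 from fun f => Fin.sum_univ_two f]
    obtain rfl | rfl : u = 0 ∨ u = 1 := by revert u; decide
    all_goals obtain rfl | rfl : v = 0 ∨ v = 1 := by revert v; decide
    all_goals norm_num [ZMod.val_one]
  simp_rw [← Finset.prod_pow_eq_pow_sum, ← Finset.prod_mul_distrib]
  rw [← Fintype.prod_sum fun i (t : ZMod 2) =>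
    (-1 : R) ^ (t.val * (j i).val) * (-1) ^ (t.val * (k i).val)]
  simp_rw [coord]
  split_ifs with hjk
  · simp [hjk]
  · obtain ⟨i, hi⟩ := Function.ne_iff.mp hjk
    exact Finset.prod_eq_zero (Finset.mem_univ i) (if_neg hi)

section UnitaryMatrices

variable {ι 𝕜 : Type*} [Fintype ι] [RCLike 𝕜]

lemma trace_mul_vecMulVec_star (A : Matrix ι ι 𝕜) (φ : ι → 𝕜) :
    (A * vecMulVec φ (star φ)).trace = star φ ⬝ᵥ (A *ᵥ φ) := by
  rw [mul_vecMulVec, trace_vecMulVec, dotProduct_comm]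

lemma star_mulVec_dotProduct_mulVec_of_mem_unitaryGroup [DecidableEq ι] {U : Matrix ι ι 𝕜}
    (hU : U ∈ unitaryGroup ι 𝕜) (φ : ι → 𝕜) : star (U *ᵥ φ) ⬝ᵥ (U *ᵥ φ) = star φ ⬝ᵥ φ := by
  rw [star_mulVec, ← dotProduct_mulVec, mulVec_mulVec, ← star_eq_conjTranspose,
    mem_unitaryGroup_iff'.mp hU, one_mulVec]

-- Equality case of Cauchy–Schwarz: `‖Uφ - cφ‖² = 1 - |c|²`.
lemma mulVec_eq_smul_of_mem_unitaryGroup [DecidableEq ι] {U : Matrix ι ι 𝕜}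
    (hU : U ∈ unitaryGroup ι 𝕜) {φ : ι → 𝕜} (hφ : star φ ⬝ᵥ φ = 1) {c : 𝕜} (hc : star c * c = 1)
    (h : star φ ⬝ᵥ (U *ᵥ φ) = c) : U *ᵥ φ = c • φ := by
  have h' : star (U *ᵥ φ) ⬝ᵥ φ = star c := by rw [star_dotProduct, h]
  have hnorm := star_mulVec_dotProduct_mulVec_of_mem_unitaryGroup hU φ
  rw [← sub_eq_zero, ← dotProduct_star_self_eq_zero]
  simp only [star_sub, star_smul, sub_dotProduct, dotProduct_sub, smul_dotProduct,
    dotProduct_smul, smul_eq_mul, hnorm, h, h', hφ]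
  linear_combination -hc

lemma conjTranspose_mulVec_eq_star_smul_of_mem_unitaryGroup [DecidableEq ι]
    {U : Matrix ι ι 𝕜} (hU : U ∈ unitaryGroup ι 𝕜) {φ : ι → 𝕜} {c : 𝕜} (hc : star c * c = 1)
    (h : U *ᵥ φ = c • φ) : Uᴴ *ᵥ φ = star c • φ := by
  have hφ : c • (Uᴴ *ᵥ φ) = φ := by
    rw [← mulVec_smul, ← h, mulVec_mulVec, ← star_eq_conjTranspose,
      mem_unitaryGroup_iff'.mp hU, one_mulVec]
  conv_rhs => rw [← hφ]
  rw [smul_smul, hc, one_smul]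

end UnitaryMatrices

lemma dotProduct_mulVec_eq_zero_of_anticommute {ι K : Type*} [Fintype ι] [Field K]
    [NeZero (2 : K)] {A U : Matrix ι ι K} (hAU : A * U = -(U * A)) {ψ φ : ι → K} {c : K}
    (hc : c ≠ 0) (hψ : ψ ᵥ* U = c • ψ) (hφ : U *ᵥ φ = c • φ) : ψ ⬝ᵥ (A *ᵥ φ) = 0 := by
  have h : c * (ψ ⬝ᵥ (A *ᵥ φ)) = -(c * (ψ ⬝ᵥ (A *ᵥ φ))) := calc
    c * (ψ ⬝ᵥ (A *ᵥ φ)) = ψ ⬝ᵥ ((A * U) *ᵥ φ) := by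
      rw [← mulVec_mulVec, hφ, mulVec_smul, dotProduct_smul, smul_eq_mul]
    _ = -((ψ ᵥ* U) ⬝ᵥ (A *ᵥ φ)) := by
      rw [hAU, neg_mulVec, dotProduct_neg, ← mulVec_mulVec, dotProduct_mulVec]
    _ = -(c * (ψ ⬝ᵥ (A *ᵥ φ))) := by rw [hψ, smul_dotProduct, smul_eq_mul]
  have h2 : (2 * c) * (ψ ⬝ᵥ (A *ᵥ φ)) = 0 := by linear_combination h
  exact (mul_eq_zero.mp h2).resolve_left (mul_ne_zero two_ne_zero hc)

lemma sq_sum_mul_le_sum_indicator_sq_mul_sum_sq {α R : Type*} [Fintype α] [CommRing R]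
    [LinearOrder R] [IsStrictOrderedRing R] (S : Set α) (f g : α → R)
    (hg : ∀ x ∉ S, g x = 0) :
    (∑ x, f x * g x) ^ 2 ≤ (∑ x, S.indicator f x ^ 2) * ∑ x, g x ^ 2 := by
  have h : ∀ x, f x * g x = S.indicator f x * g x := fun x => by
    by_cases hx : x ∈ S <;> simp [hx, hg]
  simpa only [← h] using Finset.sum_mul_sq_le_sq_mul_sq Finset.univ (S.indicator f) g

section WeylOperators

variable {n : ℕ}

lemma weyl_apply_of_ne (x : PhaseSpace n) {k j : Fin n → ZMod 2} (h : k ≠ j + x.1) :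
    Weyl x k j = 0 := by
  simp [Weyl, h]

lemma mul_weyl_apply (x : PhaseSpace n) (A : Matrix (Fin n → ZMod 2) (Fin n → ZMod 2) ℂ)
    (k j : Fin n → ZMod 2) : (A * Weyl x) k j = A k (j + x.1) * Weyl x (j + x.1) j := by
  rw [mul_apply]
  exact Finset.sum_eq_single _ (fun m _ hm => by rw [weyl_apply_of_ne x hm, mul_zero]) (by simp)

lemma weyl_mem_unitaryGroup (x : PhaseSpace n) :
    Weyl x ∈ unitaryGroup (Fin n → ZMod 2) ℂ := by
  rw [mem_unitaryGroup_iff', star_eq_conjTranspose]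
  ext j j'
  rw [mul_apply, Finset.sum_eq_single (j + x.1)
    (fun k _ hk => by rw [conjTranspose_apply, weyl_apply_of_ne x hk, star_zero, zero_mul])
    (by simp)]
  by_cases h : j = j'
  · subst h
    simp [Weyl, mul_mul_mul_comm, ← mul_pow]
  · simp [Weyl, h]

lemma weyl_mul_weyl (x y : PhaseSpace n) :
    Weyl x * Weyl y = (-1 : ℂ) ^ (sympl x y).val • (Weyl y * Weyl x) := by
  ext k j
  rw [Matrix.smul_apply, mul_weyl_apply, mul_weyl_apply]
  by_cases hk : k = j + x.1 + y.1
  · have phase : (-1 : ℂ) ^ (∑ i, (x.2 i).val * ((j + y.1) i).val) *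
          (-1) ^ (∑ i, (y.2 i).val * (j i).val)
        = (-1) ^ (sympl x y).val * ((-1) ^ (∑ i, (y.2 i).val * ((j + x.1) i).val) *
          (-1) ^ (∑ i, (x.2 i).val * (j i).val)) := by
      simp only [← pow_add]
      apply neg_one_pow_eq_of_natCast_eq
      have hsympl : sympl x y = x.1 ⬝ᵥ y.2 + x.2 ⬝ᵥ y.1 := rfl
      simp only [Nat.cast_add, natCast_sum_val_mul_val, ZMod.natCast_zmod_val, hsympl,
        dotProduct_add]
      have hcomm : y.2 ⬝ᵥ x.1 = x.1 ⬝ᵥ y.2 := dotProduct_comm _ _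
      have htwo : x.1 ⬝ᵥ y.2 + x.1 ⬝ᵥ y.2 = 0 := CharTwo.add_self_eq_zero _
      linear_combination -htwo - hcomm
    simp only [Weyl, add_right_comm j y.1 x.1, ← hk, if_true, smul_eq_mul]
    linear_combination (Complex.I ^ (∑ i, (x.1 i).val * (x.2 i).val) *
      Complex.I ^ (∑ i, (y.1 i).val * (y.2 i).val)) * phase
  · have hk' : k ≠ j + y.1 + x.1 := by rwa [add_right_comm]
    rw [weyl_apply_of_ne x hk', weyl_apply_of_ne y hk, zero_mul, zero_mul, smul_zero]

lemma trace_weyl_mul (x : PhaseSpace n) (A : Matrix (Fin n → ZMod 2) (Fin n → ZMod 2) ℂ) :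
    (Weyl x * A).trace = Complex.I ^ (∑ i, (x.1 i).val * (x.2 i).val) *
      ∑ j, (-1 : ℂ) ^ (∑ i, (x.2 i).val * (j i).val) * A j (j + x.1) := by
  rw [← trace_mul_comm, trace, Finset.mul_sum]
  refine Finset.sum_congr rfl fun j _ => ?_
  rw [diag_apply, mul_weyl_apply]
  simp only [Weyl, if_true]
  ring

lemma trace_weyl_mul_mul_star_trace_weyl_mul (a b : Fin n → ZMod 2)
    (A C : Matrix (Fin n → ZMod 2) (Fin n → ZMod 2) ℂ) :
    (Weyl (a, b) * A).trace * star (Weyl (a, b) * C).trace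
      = ∑ j, ∑ k, (-1 : ℂ) ^ (∑ i, (b i).val * (j i).val) * (-1) ^ (∑ i, (b i).val * (k i).val)
          * (A j (j + a) * star (C k (k + a))) := by
  have phase : ∀ q : ℕ, Complex.I ^ q * star (Complex.I ^ q) = 1 := fun q => by
    rw [star_pow, ← mul_pow, Complex.star_def, Complex.mul_conj, Complex.normSq_I]; simp
  rw [trace_weyl_mul, trace_weyl_mul, star_mul', mul_mul_mul_comm, phase, one_mul, star_sum,
    Finset.sum_mul_sum]
  refine Finset.sum_congr rfl fun j _ => Finset.sum_congr rfl fun k _ => ?_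
  rw [star_mul', star_pow, star_neg, star_one]
  ring

lemma sum_trace_weyl_mul_mul_star_trace_weyl_mul
    (A C : Matrix (Fin n → ZMod 2) (Fin n → ZMod 2) ℂ) :
    ∑ x : PhaseSpace n, (Weyl x * A).trace * star (Weyl x * C).trace = 2 ^ n * (A * Cᴴ).trace := by
  calc ∑ x : PhaseSpace n, (Weyl x * A).trace * star (Weyl x * C).trace
      = ∑ a, ∑ j, ∑ k, (∑ b : Fin n → ZMod 2, (-1 : ℂ) ^ (∑ i, (b i).val * (j i).val) *
          (-1) ^ (∑ i, (b i).val * (k i).val)) * (A j (j + a) * star (C k (k + a))) := by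
        rw [Fintype.sum_prod_type]
        refine Finset.sum_congr rfl fun a _ => ?_
        simp_rw [trace_weyl_mul_mul_star_trace_weyl_mul, Finset.sum_mul]
        rw [Finset.sum_comm]
        exact Finset.sum_congr rfl fun j _ => Finset.sum_comm
    _ = ∑ j, ∑ a, 2 ^ n * (A j (j + a) * star (C j (j + a))) := by
        simp_rw [sum_neg_one_pow_mul_neg_one_pow, ite_mul, zero_mul, Finset.sum_ite_eq,
          Finset.mem_univ, if_true]
        exact Finset.sum_comm
    _ = 2 ^ n * (A * Cᴴ).trace := by
        simp_rw [trace, diag_apply, mul_apply, conjTranspose_apply, Finset.mul_sum]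
        refine Finset.sum_congr rfl fun j _ => ?_
        exact Equiv.sum_comp (Equiv.addLeft j) fun k => 2 ^ n * (A j k * star (C j k))

end WeylOperators

section StabilizerStates

variable {n : ℕ}

lemma outer_eq_vecMulVec_star (φ : (Fin n → ZMod 2) → ℂ) :
    outer φ = vecMulVec φ (star φ) := rfl

lemma IsStabilizerState.star_dotProduct_self {φ : (Fin n → ZMod 2) → ℂ}
    (hφ : IsStabilizerState φ) : star φ ⬝ᵥ φ = 1 := by
  have h := congrArg (fun r : ℝ => (r : ℂ)) hφ.1
  simp only [Complex.ofReal_sum, Complex.normSq_eq_conj_mul_self, Complex.ofReal_one] at h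
  exact h

lemma IsStabilizerState.trace_weyl_mul_outer_eq_zero {φ : (Fin n → ZMod 2) → ℂ}
    (hφ : IsStabilizerState φ) {x : PhaseSpace n} (hx : x ∉ weylSet (outer φ)) :
    (Weyl x * outer φ).trace = 0 := by
  obtain ⟨y, hy, hxy⟩ : ∃ y ∈ weylSet (outer φ), sympl x y ≠ 0 := by
    by_contra! h
    exact hx (hφ.2 ▸ h)
  set c := (Weyl y * outer φ).trace
  have hc : star c * c = 1 := by rcases hy with h | h <;> simp [c, h]
  have hyφ : Weyl y *ᵥ φ = c • φ :=
    mulVec_eq_smul_of_mem_unitaryGroup (weyl_mem_unitaryGroup y) hφ.star_dotProduct_self hc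
      (by rw [← trace_mul_vecMulVec_star]; rfl)
  have hφy : star φ ᵥ* Weyl y = c • star φ := by
    rw [← conjTranspose_conjTranspose (Weyl y), ← star_mulVec,
      conjTranspose_mulVec_eq_star_smul_of_mem_unitaryGroup (weyl_mem_unitaryGroup y) hc hyφ,
      star_smul, star_star]
  have hanti : Weyl x * Weyl y = -(Weyl y * Weyl x) := by
    rw [weyl_mul_weyl, (show ∀ z : ZMod 2, z ≠ 0 → z.val = 1 by decide) _ hxy, pow_one,
      neg_one_smul]
  rw [outer_eq_vecMulVec_star, trace_mul_vecMulVec_star]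
  exact dotProduct_mulVec_eq_zero_of_anticommute hanti (right_ne_zero_of_mul_eq_one hc) hφy hyφ

lemma IsStabilizerState.trace_weyl_mul_outer_im_eq_zero {φ : (Fin n → ZMod 2) → ℂ}
    (hφ : IsStabilizerState φ) (x : PhaseSpace n) : (Weyl x * outer φ).trace.im = 0 := by
  by_cases hx : x ∈ weylSet (outer φ)
  · rcases hx with h | h <;> simp [h]
  · simp [hφ.trace_weyl_mul_outer_eq_zero hx]

lemma IsStabilizerState.sum_re_trace_weyl_mul_mul_re_trace_weyl_mul_outer
    {φ : (Fin n → ZMod 2) → ℂ} (hφ : IsStabilizerState φ)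
    (A : Matrix (Fin n → ZMod 2) (Fin n → ZMod 2) ℂ) :
    ∑ x, (Weyl x * A).trace.re * (Weyl x * outer φ).trace.re = 2 ^ n * (A * outer φ).trace.re := by
  have h := congrArg Complex.re (sum_trace_weyl_mul_mul_star_trace_weyl_mul A (outer φ))
  rw [outer_eq_vecMulVec_star, conjTranspose_vecMulVec, star_star, ← outer_eq_vecMulVec_star]
    at h
  have h2n : (2 : ℂ) ^ n = ((2 ^ n : ℝ) : ℂ) := by norm_cast
  rw [h2n, Complex.re_ofReal_mul, Complex.re_sum] at h
  simpa [hφ.trace_weyl_mul_outer_im_eq_zero] using h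

lemma IsStabilizerState.trace_outer_mul_outer {φ : (Fin n → ZMod 2) → ℂ}
    (hφ : IsStabilizerState φ) : (outer φ * outer φ).trace = 1 := by
  rw [outer_eq_vecMulVec_star, vecMulVec_mul_vecMulVec, trace_vecMulVec,
    hφ.star_dotProduct_self, one_smul, dotProduct_comm, hφ.star_dotProduct_self]

end StabilizerStates

theorem sum_pFun_on_weylSet_ge_general {n : ℕ}
    (ρ : Matrix (Fin n → ZMod 2) (Fin n → ZMod 2) ℂ)
    (φ : (Fin n → ZMod 2) → ℂ) (hφ : IsStabilizerState φ)
    (L : Set (PhaseSpace n)) (hL : L = weylSet (outer φ)) :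
    ∑ x, L.indicator (pFun ρ) x ≥ (((ρ * outer φ).trace).re) ^ 2 := by
  set r : PhaseSpace n → ℝ := fun x => (Weyl x * ρ).trace.re
  set s : PhaseSpace n → ℝ := fun x => (Weyl x * outer φ).trace.re
  have hs : ∀ x ∉ L, s x = 0 := fun x hx => by
    simp [s, hφ.trace_weyl_mul_outer_eq_zero (hL ▸ hx)]
  have hss : ∑ x, s x ^ 2 = 2 ^ n := by
    simpa [sq, hφ.trace_outer_mul_outer] using
      hφ.sum_re_trace_weyl_mul_mul_re_trace_weyl_mul_outer (outer φ)
  have hrs : ∑ x, r x * s x = 2 ^ n * (ρ * outer φ).trace.re :=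
    hφ.sum_re_trace_weyl_mul_mul_re_trace_weyl_mul_outer ρ
  have hr : ∑ x, L.indicator r x ^ 2 = 2 ^ n * ∑ x, L.indicator (pFun ρ) x := by
    rw [Finset.mul_sum]
    refine Finset.sum_congr rfl fun x _ => ?_
    by_cases hx : x ∈ L <;> simp [hx, pFun, r, mul_div_cancel₀]
  have hCS := sq_sum_mul_le_sum_indicator_sq_mul_sum_sq L r s hs
  rw [hrs, hss, hr] at hCS
  have h2n : (0 : ℝ) < 2 ^ n * 2 ^ n := by positivity
  nlinarith

/-- Let ρ be an n-qubit mixed state and |φ⟩ a stabilizer state with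
L = Weyl(|φ⟩⟨φ|). Then ∑_{x ∈ L} p_ρ(x) ≥ ⟨φ|ρ|φ⟩². -/
theorem sum_pFun_on_weylSet_ge {n : ℕ}
    (ρ : Matrix (Fin n → ZMod 2) (Fin n → ZMod 2) ℂ)
    (hρ : ρ.PosSemidef) (hτ : ρ.trace = 1)
    (φ : (Fin n → ZMod 2) → ℂ) (hφ : IsStabilizerState φ)
    (L : Set (PhaseSpace n)) (hL : L = weylSet (outer φ)) :
    ∑ x, L.indicator (pFun ρ) x ≥ (((ρ * outer φ).trace).re) ^ 2 :=
  sum_pFun_on_weylSet_ge_general ρ φ hφ L hL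
end

section
/- Let f : 𝔽₂^{2n} → ℝ satisfy 0 ≤ f(x) ≤ 2^{-n} for all x and Σ_{x ∈ 𝔽₂^{2n}} f(x) ≤ 1, and suppose 2^n · Σ_{x,y ∈ 𝔽₂^{2n}} f(x) f(y) f(x+y) ≥ γ. Then the set M := {x ∈ 𝔽₂^{2n} : 2^n f(x) ≥ γ/4} has cardinality |M| ≥ (3/4) · γ · 2^n. -/
/-! Writing `y = z - x`, the triple sum is `∑_z f(z) (f ∗ f)(z)`. The convolution `f ∗ f` is at most
`2^{-n}` pointwise and has total mass `(∑ f)² ≤ 1`. Splitting the sum at `z ∈ M`, the terms in `M`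
contribute at most `|M| · 4^{-n}`, and those outside at most `γ / (4 · 2^n)` times the mass of `f ∗ f`.
Hence `γ ≤ |M| / 2^n + γ / 4`. -/

open scoped BigOperators ComplexOrder

open Finset

section Convolution

variable {G : Type*} [AddCommGroup G] [Fintype G]

def conv (f g : G → ℝ) (z : G) : ℝ := ∑ x, f x * g (z - x)

lemma sum_sum_mul_mul_add_eq_sum_mul_conv (f g h : G → ℝ) :
    ∑ x, ∑ y, f x * g y * h (x + y) = ∑ z, h z * conv f g z := by
  have hx : ∀ x, ∑ y, f x * g y * h (x + y) = ∑ z, f x * g (z - x) * h z := fun x =>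
    Fintype.sum_equiv (Equiv.addLeft x) _ _ fun y => by simp
  simp_rw [hx, conv, mul_sum]
  rw [sum_comm]
  exact Fintype.sum_congr _ _ fun z => Fintype.sum_congr _ _ fun x => by ring

lemma conv_nonneg {f g : G → ℝ} (hf : ∀ x, 0 ≤ f x) (hg : ∀ x, 0 ≤ g x) (z : G) :
    0 ≤ conv f g z :=
  sum_nonneg fun x _ => mul_nonneg (hf x) (hg _)

lemma conv_le_mul_sum {f g : G → ℝ} {B : ℝ} (hf : ∀ x, 0 ≤ f x) (hg : ∀ x, g x ≤ B) (z : G) :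
    conv f g z ≤ B * ∑ x, f x := by
  rw [mul_sum]
  exact sum_le_sum fun x _ => by
    rw [mul_comm B]
    exact mul_le_mul_of_nonneg_left (hg _) (hf x)

lemma sum_conv (f g : G → ℝ) : ∑ z, conv f g z = (∑ x, f x) * ∑ y, g y := by
  simp_rw [conv, sum_mul, mul_sum]
  rw [sum_comm]
  exact Fintype.sum_congr _ _ fun x =>
    Fintype.sum_equiv (Equiv.subRight x) _ _ fun z => rfl

end Convolution

lemma sum_mul_le_card_mul_add {ι : Type*} [Fintype ι] {f w : ι → ℝ} {t A B : ℝ}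
    [DecidablePred fun i => t ≤ f i] (ht : 0 ≤ t) (hf0 : ∀ i, 0 ≤ f i) (hfA : ∀ i, f i ≤ A)
    (hw0 : ∀ i, 0 ≤ w i) (hwB : ∀ i, w i ≤ B) :
    ∑ i, f i * w i ≤ #{i | t ≤ f i} * (A * B) + t * ∑ i, w i := by
  rw [← sum_filter_add_sum_filter_not univ (fun i => t ≤ f i)]
  gcongr
  · rw [← nsmul_eq_mul]
    exact sum_le_card_nsmul _ _ _ fun i _ =>
      mul_le_mul (hfA i) (hwB i) (hw0 i) ((hf0 i).trans (hfA i))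
  · calc ∑ i ∈ univ.filter (fun i => ¬t ≤ f i), f i * w i
        ≤ ∑ i ∈ univ.filter (fun i => ¬t ≤ f i), t * w i :=
          sum_le_sum fun i hi =>
            mul_le_mul_of_nonneg_right (not_le.mp (mem_filter.mp hi).2).le (hw0 i)
      _ ≤ t * ∑ i, w i := by
          rw [← mul_sum]
          exact mul_le_mul_of_nonneg_left
            (sum_le_sum_of_subset_of_nonneg (filter_subset _ _)
              fun i _ _ => hw0 i) ht

theorem card_large_values_ge_general {n : ℕ} (γ : ℝ) (hγ : 0 < γ)
    (f : PhaseSpace n → ℝ)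
    (hf0 : ∀ x, 0 ≤ f x) (hf1 : ∀ x, f x ≤ 1 / 2 ^ n)
    (hsum : ∑ x, f x ≤ 1)
    (hγle : γ ≤ 2 ^ n * ∑ x, ∑ y, f x * f y * f (x + y)) :
    (3 / 4 : ℝ) * γ * 2 ^ n
      ≤ (Nat.card {x : PhaseSpace n | γ / 4 ≤ 2 ^ n * f x} : ℝ) := by
  classical
  have hpow : (0 : ℝ) < 2 ^ n := by positivity
  have hsum0 : 0 ≤ ∑ x, f x := sum_nonneg fun x _ => hf0 x
  set t := γ / (4 * 2 ^ n)
  have hM : {x : PhaseSpace n | γ / 4 ≤ 2 ^ n * f x} = ↑(univ.filter fun x => t ≤ f x) := by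
    ext x
    simp [t, div_mul_eq_div_div, div_le_iff₀ hpow, mul_comm]
  have hconv_le : ∀ z, conv f f z ≤ 1 / 2 ^ n := fun z =>
    (conv_le_mul_sum hf0 hf1 z).trans (mul_le_of_le_one_right (by positivity) hsum)
  have hconv_mass : ∑ z, conv f f z ≤ 1 := by
    rw [sum_conv]; exact mul_le_one₀ hsum hsum0 hsum
  have hsplit := sum_mul_le_card_mul_add (t := t) (by positivity) hf0 hf1 (conv_nonneg hf0 hf0)
    hconv_le
  rw [← sum_sum_mul_mul_add_eq_sum_mul_conv] at hsplit
  rw [hM, Nat.card_coe_set_eq, Set.ncard_coe_finset]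
  have hbound : γ ≤ #{x | t ≤ f x} / 2 ^ n + γ / 4 := calc
    γ ≤ 2 ^ n * (#{x | t ≤ f x} * (1 / 2 ^ n * (1 / 2 ^ n)) + t * ∑ z, conv f f z) :=
        hγle.trans (by gcongr)
    _ ≤ 2 ^ n * (#{x | t ≤ f x} * (1 / 2 ^ n * (1 / 2 ^ n)) + t * 1) := by gcongr
    _ = #{x | t ≤ f x} / 2 ^ n + γ / 4 := by simp only [t]; field_simp
  have h34 : 3 / 4 * γ ≤ (#{x | t ≤ f x} : ℝ) / 2 ^ n := by linarith
  rwa [le_div_iff₀ hpow] at h34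

/-- If 0 ≤ f ≤ 2^{-n}, ∑ f ≤ 1 and
2^n ∑_{x,y} f(x)f(y)f(x+y) ≥ γ, then
M := {x : 2^n f(x) ≥ γ/4} satisfies |M| ≥ (3/4) γ 2^n. -/
theorem card_large_values_ge {n : ℕ} (hn : 0 < n) (γ : ℝ) (hγ : 0 < γ)
    (f : PhaseSpace n → ℝ)
    (hf0 : ∀ x, 0 ≤ f x) (hf1 : ∀ x, f x ≤ 1 / 2 ^ n)
    (hsum : ∑ x, f x ≤ 1)
    (hγle : γ ≤ 2 ^ n * ∑ x, ∑ y, f x * f y * f (x + y)) :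
    (3 / 4 : ℝ) * γ * 2 ^ n
      ≤ (Nat.card {x : PhaseSpace n | γ / 4 ≤ 2 ^ n * f x} : ℝ) :=
  card_large_values_ge_general γ hγ f hf0 hf1 hsum hγle
end

section
/- There exists a universal constant c > 0 such that the following holds. Let f : 𝔽₂^{2n} → ℝ satisfy 0 ≤ f(x) ≤ 2^{-n} for all x and Σ_{x ∈ 𝔽₂^{2n}} f(x) ≤ 1, and suppose 2^n · Σ_{x,y ∈ 𝔽₂^{2n}} f(x) f(y) f(x+y) ≥ γ for some γ > 0. Then there exists a subset S ⊆ 𝔽₂^{2n} with (γ²/80) · 2^n ≤ |S| ≤ (4/γ) · 2^n such that: (i) for all x ∈ S, 2^n f(x) ≥ γ/4; and (ii) Pr_{x,y uniform in S}[x + y ∈ S] ≥ c · γ^5. -/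
open scoped BigOperators ComplexOrder

/-!
Take `S` to be the superlevel set `{x | 2ⁿ f(x) ≥ γ / 4}`; by Markov, `|S| ≤ (4 / γ) 2ⁿ`. In the
triple sum `∑ f(x) f(y) f(x + y)`, a triple with a point outside `S` has a factor below
`γ / (4 · 2ⁿ)`, while each of the three pair sums `∑ f(x) f(y)`, `∑ f(x) f(x + y)`,
`∑ f(y) f(x + y)` is `(∑ f)² ≤ 1`; so such triples contribute at most `3γ / (4 · 2ⁿ)`, and the
triples inside `S` contribute at least `γ / (4 · 2ⁿ)`. As each term is at most `2⁻³ⁿ`, at least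
`(γ / 4) 4ⁿ` pairs `(x, y) ∈ S²` have `x + y ∈ S`. Compared with `|S|² ≤ 16 · 4ⁿ / γ²` this gives
the density `γ³ / 64`, and compared with `|S|²` itself it gives `|S| ≥ (γ / 2) 2ⁿ`.
-/

open Finset

lemma card_superlevel_mul_le_sum {α : Type*} [Fintype α] {f : α → ℝ} (hf : ∀ x, 0 ≤ f x) (t : ℝ) :
    #{x | t ≤ f x} * t ≤ ∑ x, f x :=
  calc #{x | t ≤ f x} * t = ∑ x ∈ {x | t ≤ f x}, t := by rw [sum_const, nsmul_eq_mul]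
    _ ≤ ∑ x ∈ {x | t ≤ f x}, f x := sum_le_sum fun x hx => (mem_filter.mp hx).2
    _ ≤ ∑ x, f x := sum_le_univ_sum_of_nonneg hf

lemma card_superlevel_le {α : Type*} [Fintype α] {f : α → ℝ} {N γ : ℝ} (hN : 0 < N) (hγ₀ : 0 < γ)
    (hf : ∀ x, 0 ≤ f x) (hsum : ∑ x, f x ≤ 1) : (#{x | γ / (4 * N) ≤ f x} : ℝ) ≤ 4 / γ * N := by
  have := (card_superlevel_mul_le_sum hf (γ / (4 * N))).trans hsum
  rw [mul_div_assoc', div_le_one (by positivity)] at this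
  rw [div_mul_eq_mul_div, le_div_iff₀ hγ₀]
  linarith

lemma mul_mul_le_of_le_or {a b c B : ℝ} (ha : 0 ≤ a) (hb : 0 ≤ b) (hc : 0 ≤ c)
    (h : a ≤ B ∨ b ≤ B ∨ c ≤ B) : a * b * c ≤ B * (b * c + a * c + a * b) := by
  have hab := mul_nonneg ha hb
  have hac := mul_nonneg ha hc
  have hbc := mul_nonneg hb hc
  rcases h with h | h | h
  · nlinarith [mul_le_mul_of_nonneg_right h hbc]
  · nlinarith [mul_le_mul_of_nonneg_right h hac]
  · nlinarith [mul_le_mul_of_nonneg_left h hab]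

section FiniteAbelianGroup

variable {G : Type*} [AddCommGroup G] [Fintype G]

lemma sum_sum_mul_apply_add (f : G → ℝ) :
    ∑ x, ∑ y, f x * f (x + y) = (∑ x, f x) ^ 2 := by
  have shift (x : G) : ∑ y, f (x + y) = ∑ y, f y :=
    Fintype.sum_equiv (Equiv.addLeft x) _ _ fun _ => rfl
  simp only [← mul_sum, shift, ← sum_mul, sq]

lemma sum_sum_mul_apply_add' (f : G → ℝ) :
    ∑ x, ∑ y, f y * f (x + y) = (∑ x, f x) ^ 2 := by
  rw [sum_comm]
  simp only [add_comm _ (_ : G)]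
  exact sum_sum_mul_apply_add f

lemma sum_sum_mul_mul_apply_add_le {f : G → ℝ} {M : ℝ} (hf : ∀ x, 0 ≤ f x)
    (hM : ∀ x, f x ≤ M) : ∑ x, ∑ y, f x * f y * f (x + y) ≤ M * (∑ x, f x) ^ 2 := by
  calc ∑ x, ∑ y, f x * f y * f (x + y) ≤ ∑ x, ∑ y, f x * f y * M := by
        gcongr with x _ y _
        · exact mul_nonneg (hf x) (hf y)
        · exact hM _
    _ = M * (∑ x, f x) ^ 2 := by rw [sq, sum_mul_sum, mul_comm, sum_mul]; simp only [sum_mul]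

lemma le_one_of_le_mul_sum_sum_mul_mul {f : G → ℝ} {N γ : ℝ} (hN : 0 < N) (hf : ∀ x, 0 ≤ f x)
    (hfN : ∀ x, f x ≤ 1 / N) (hsum : ∑ x, f x ≤ 1)
    (hT : γ ≤ N * ∑ x, ∑ y, f x * f y * f (x + y)) : γ ≤ 1 :=
  calc γ ≤ N * (1 / N * (∑ x, f x) ^ 2) :=
        hT.trans (mul_le_mul_of_nonneg_left (sum_sum_mul_mul_apply_add_le hf hfN) hN.le)
    _ = (∑ x, f x) ^ 2 := by field_simp
    _ ≤ 1 := pow_le_one₀ (sum_nonneg fun x _ => hf x) hsum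

variable [DecidableEq G]

def closedPairs (s : Finset G) : Finset (G × G) :=
  univ.filter fun p => p.1 ∈ s ∧ p.2 ∈ s ∧ p.1 + p.2 ∈ s

lemma card_closedPairs_le_sq (s : Finset G) : #(closedPairs s) ≤ #s ^ 2 := by
  rw [sq, ← card_product]
  exact card_le_card fun p hp => by
    simp only [closedPairs, mem_filter, mem_univ, true_and] at hp
    exact mem_product.mpr ⟨hp.1, hp.2.1⟩

lemma natCard_closedPairs (s : Finset G) :
    Nat.card {p : G × G // p.1 ∈ (s : Set G) ∧ p.2 ∈ (s : Set G) ∧ p.1 + p.2 ∈ (s : Set G)} =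
      #(closedPairs s) := by
  simp only [mem_coe, Nat.card_eq_fintype_card, Fintype.card_subtype, closedPairs]

lemma sum_sum_mul_mul_apply_add_le_sum_closedPairs {f : G → ℝ} {s : Finset G} {B : ℝ}
    (hf : ∀ x, 0 ≤ f x) (hB : 0 ≤ B) (hs : ∀ x ∉ s, f x ≤ B) :
    ∑ x, ∑ y, f x * f y * f (x + y) ≤
      ∑ p ∈ closedPairs s, f p.1 * f p.2 * f (p.1 + p.2) + 3 * B * (∑ x, f x) ^ 2 := by
  have pointwise (x y : G) : f x * f y * f (x + y) ≤
      (if x ∈ s ∧ y ∈ s ∧ x + y ∈ s then f x * f y * f (x + y) else 0) +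
        B * (f y * f (x + y) + f x * f (x + y) + f x * f y) := by
    split_ifs with hxy
    · have := mul_nonneg hB (add_nonneg (add_nonneg (mul_nonneg (hf y) (hf (x + y)))
        (mul_nonneg (hf x) (hf (x + y)))) (mul_nonneg (hf x) (hf y)))
      linarith
    · have hout : x ∉ s ∨ y ∉ s ∨ x + y ∉ s := by tauto
      rw [zero_add]
      exact mul_mul_le_of_le_or (hf x) (hf y) (hf (x + y)) (hout.imp (hs x) (.imp (hs y) (hs _)))
  calc ∑ x, ∑ y, f x * f y * f (x + y)
      ≤ ∑ x, ∑ y, ((if x ∈ s ∧ y ∈ s ∧ x + y ∈ s then f x * f y * f (x + y) else 0) +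
        B * (f y * f (x + y) + f x * f (x + y) + f x * f y)) := by
        gcongr with x _ y _
        exact pointwise x y
    _ = ∑ p ∈ closedPairs s, f p.1 * f p.2 * f (p.1 + p.2) + 3 * B * (∑ x, f x) ^ 2 := by
      have pair_sums : 3 * B * (∑ x, f x) ^ 2 = B * (∑ x, ∑ y, f y * f (x + y) +
          ∑ x, ∑ y, f x * f (x + y) + ∑ x, ∑ y, f x * f y) := by
        rw [sum_sum_mul_apply_add, sum_sum_mul_apply_add', ← sum_mul_sum]; ring
      rw [pair_sums, closedPairs, sum_filter, Fintype.sum_prod_type]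
      simp only [sum_add_distrib, mul_add, mul_sum]

lemma le_card_closedPairs_superlevel {f : G → ℝ} {N γ : ℝ} (hN : 0 < N) (hγ₀ : 0 ≤ γ)
    (hf : ∀ x, 0 ≤ f x) (hfN : ∀ x, f x ≤ 1 / N) (hsum : ∑ x, f x ≤ 1)
    (hT : γ ≤ N * ∑ x, ∑ y, f x * f y * f (x + y)) :
    γ / 4 * N ^ 2 ≤ #(closedPairs {x | γ / (4 * N) ≤ f x}) := by
  set S : Finset G := {x | γ / (4 * N) ≤ f x}
  have outside : ∀ x ∉ S, f x ≤ γ / (4 * N) := fun x hx =>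
    (not_le.mp (by simpa [S] using hx)).le
  have inside : ∑ p ∈ closedPairs S, f p.1 * f p.2 * f (p.1 + p.2) ≤
      #(closedPairs S) * (1 / N) ^ 3 := by
    rw [← nsmul_eq_mul]
    refine sum_le_card_nsmul _ _ _ fun p _ => ?_
    rw [pow_three, ← mul_assoc]
    gcongr <;> first | exact hf _ | exact hfN _
  have hsq : (∑ x, f x) ^ 2 ≤ 1 := pow_le_one₀ (sum_nonneg fun x _ => hf x) hsum
  have split := sum_sum_mul_mul_apply_add_le_sum_closedPairs hf (by positivity) outside
  have key : γ ≤ #(closedPairs S) / N ^ 2 + 3 * (γ / 4) := by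
    calc γ ≤ N * (#(closedPairs S) * (1 / N) ^ 3 + 3 * (γ / (4 * N)) * 1) := by
          refine hT.trans (mul_le_mul_of_nonneg_left (split.trans ?_) hN.le)
          gcongr
      _ = #(closedPairs S) / N ^ 2 + 3 * (γ / 4) := by field_simp
  rw [← le_div_iff₀ (by positivity)]
  linarith

lemma le_card_superlevel {f : G → ℝ} {N γ : ℝ} (hN : 0 < N) (hγ₀ : 0 ≤ γ)
    (hf : ∀ x, 0 ≤ f x) (hfN : ∀ x, f x ≤ 1 / N) (hsum : ∑ x, f x ≤ 1)
    (hT : γ ≤ N * ∑ x, ∑ y, f x * f y * f (x + y)) :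
    γ / 2 * N ≤ #{x | γ / (4 * N) ≤ f x} := by
  have hγ1 := le_one_of_le_mul_sum_sum_mul_mul hN hf hfN hsum hT
  have hsq : (γ / 2 * N) ^ 2 ≤ (#{x | γ / (4 * N) ≤ f x} : ℝ) ^ 2 :=
    calc (γ / 2 * N) ^ 2 = γ ^ 2 / 4 * N ^ 2 := by ring
      _ ≤ γ / 4 * N ^ 2 := by gcongr; nlinarith
      _ ≤ (#(closedPairs {x | γ / (4 * N) ≤ f x}) : ℝ) :=
        le_card_closedPairs_superlevel hN hγ₀ hf hfN hsum hT
      _ ≤ (#{x | γ / (4 * N) ≤ f x} : ℝ) ^ 2 := mod_cast card_closedPairs_le_sq _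
  exact le_of_sq_le_sq hsq (Nat.cast_nonneg _)

lemma le_div_card_sq_closedPairs_superlevel {f : G → ℝ} {N γ : ℝ} (hN : 0 < N) (hγ₀ : 0 < γ)
    (hf : ∀ x, 0 ≤ f x) (hfN : ∀ x, f x ≤ 1 / N) (hsum : ∑ x, f x ≤ 1)
    (hT : γ ≤ N * ∑ x, ∑ y, f x * f y * f (x + y)) :
    γ ^ 3 / 64 ≤ #(closedPairs {x | γ / (4 * N) ≤ f x}) / (#{x | γ / (4 * N) ≤ f x} : ℝ) ^ 2 := by
  have hS_lower := le_card_superlevel hN hγ₀.le hf hfN hsum hT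
  have hS_upper := card_superlevel_le hN hγ₀ hf hsum
  have hC := le_card_closedPairs_superlevel hN hγ₀.le hf hfN hsum hT
  have hS_pos : (0 : ℝ) < #{x | γ / (4 * N) ≤ f x} := lt_of_lt_of_le (by positivity) hS_lower
  rw [le_div_iff₀ (by positivity)]
  calc γ ^ 3 / 64 * (#{x | γ / (4 * N) ≤ f x} : ℝ) ^ 2 ≤ γ ^ 3 / 64 * (4 / γ * N) ^ 2 := by
        gcongr
    _ = γ / 4 * N ^ 2 := by field_simp; ring
    _ ≤ _ := hC

end FiniteAbelianGroup

/-- There is a universal constant c > 0 such that: if 0 ≤ f ≤ 2^{-n},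
∑ f ≤ 1 and 2^n ∑_{x,y} f(x)f(y)f(x+y) ≥ γ > 0, then there is a subset
S ⊆ 𝔽₂^{2n} with (γ²/80)·2^n ≤ |S| ≤ (4/γ)·2^n, such that 2^n f(x) ≥ γ/4 on S
and Pr_{x,y ∈ S}[x + y ∈ S] ≥ c γ⁵. -/
theorem exists_approximate_subgroup :
    ∃ c : ℝ, 0 < c ∧
      ∀ (n : ℕ), 0 < n → ∀ (f : PhaseSpace n → ℝ) (γ : ℝ), 0 < γ →
        (∀ x, 0 ≤ f x) → (∀ x, f x ≤ 1 / 2 ^ n) → (∑ x, f x ≤ 1) →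
        γ ≤ 2 ^ n * ∑ x, ∑ y, f x * f y * f (x + y) →
        ∃ S : Set (PhaseSpace n),
          (γ ^ 2 / 80) * 2 ^ n ≤ (Nat.card S : ℝ) ∧
          (Nat.card S : ℝ) ≤ (4 / γ) * 2 ^ n ∧
          (∀ x ∈ S, γ / 4 ≤ 2 ^ n * f x) ∧
          c * γ ^ 5 ≤
            (Nat.card {p : PhaseSpace n × PhaseSpace n //
                p.1 ∈ S ∧ p.2 ∈ S ∧ p.1 + p.2 ∈ S} : ℝ) / (Nat.card S : ℝ) ^ 2 := by
  refine ⟨1 / 64, by norm_num, fun n _ f γ hγ hf hfN hsum hT => ?_⟩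
  have hN : (0 : ℝ) < 2 ^ n := by positivity
  have hγ1 := le_one_of_le_mul_sum_sum_mul_mul hN hf hfN hsum hT
  set S : Finset (PhaseSpace n) := {x | γ / (4 * 2 ^ n) ≤ f x}
  refine ⟨S, ?_, ?_, fun x hx => ?_, ?_⟩
  · rw [Nat.card_coe_set_eq, Set.ncard_coe_finset]
    calc γ ^ 2 / 80 * 2 ^ n ≤ γ / 2 * 2 ^ n := by gcongr ?_ * _; nlinarith
      _ ≤ #S := le_card_superlevel hN hγ.le hf hfN hsum hT
  · rw [Nat.card_coe_set_eq, Set.ncard_coe_finset]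
    exact card_superlevel_le hN hγ hf hsum
  · have hx : γ / (4 * 2 ^ n) ≤ f x := (mem_filter.mp hx).2
    rw [div_le_iff₀ (by positivity)] at hx
    linarith
  · rw [natCard_closedPairs, Nat.card_coe_set_eq, Set.ncard_coe_finset]
    calc 1 / 64 * γ ^ 5 ≤ γ ^ 3 / 64 := by
          rw [one_div_mul_eq_div]
          gcongr ?_ / _
          exact pow_le_pow_of_le_one hγ.le hγ1 (by norm_num)
      _ ≤ _ := le_div_card_sq_closedPairs_superlevel hN hγ hf hfN hsum hT
end

section
/- Let f : 𝔽₂^{2n} → ℝ satisfy 0 ≤ f(x) ≤ 2^{-n} for all x and Σ_{x ∈ 𝔽₂^{2n}} f(x) ≤ 1, and let M := {x ∈ 𝔽₂^{2n} : 2^n f(x) > 1/2}. Then Σ_{x ∈ M} f(x) ≥ (4 · (4^n · Σ_{x ∈ 𝔽₂^{2n}} f(x)³) − 1) / 3. -/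
/-!
Put `t = 2ⁿ f(x) ∈ [0, 1]`, so that `4ⁿ f(x)³ = t² f(x)`. Where `t > 1/2` we bound `4 t² f(x)` by
`4 f(x)`, elsewhere by `f(x)`; hence `4 · 4ⁿ f(x)³ ≤ f(x) + 3 · 1_M(x) f(x)` pointwise, and summing
over `x` with `∑ f ≤ 1` gives the claim.
-/

open scoped BigOperators ComplexOrder

lemma four_mul_sq_mul_cube_le_add_indicator {ι : Type*} (f : ι → ℝ) {c : ℝ} (hc : 0 ≤ c) {i : ι}
    (hf0 : 0 ≤ f i) (hf1 : c * f i ≤ 1) :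
    4 * (c ^ 2 * f i ^ 3) ≤ f i + 3 * {i | 1 / 2 < c * f i}.indicator f i := by
  have hscaled : 0 ≤ c * f i := mul_nonneg hc hf0
  have hcube : c ^ 2 * f i ^ 3 = (c * f i) ^ 2 * f i := by ring
  rw [hcube]
  by_cases hlarge : 1 / 2 < c * f i
  · rw [Set.indicator_of_mem (show i ∈ {i | 1 / 2 < c * f i} from hlarge)]
    have hsq : (c * f i) ^ 2 ≤ 1 := pow_le_one₀ hscaled hf1
    nlinarith
  · rw [Set.indicator_of_notMem (show i ∉ {i | 1 / 2 < c * f i} from hlarge)]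
    have hsq : (c * f i) ^ 2 ≤ 1 / 4 := by nlinarith
    nlinarith

theorem four_mul_sq_mul_sum_cube_le {ι : Type*} [Fintype ι] (f : ι → ℝ) {c : ℝ} (hc : 0 ≤ c)
    (hf0 : ∀ i, 0 ≤ f i) (hf1 : ∀ i, c * f i ≤ 1) :
    4 * (c ^ 2 * ∑ i, f i ^ 3)
      ≤ ∑ i, f i + 3 * ∑ i, {i | 1 / 2 < c * f i}.indicator f i := by
  calc 4 * (c ^ 2 * ∑ i, f i ^ 3) = ∑ i, 4 * (c ^ 2 * f i ^ 3) := by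
        rw [Finset.mul_sum, Finset.mul_sum]
    _ ≤ ∑ i, (f i + 3 * {i | 1 / 2 < c * f i}.indicator f i) :=
        Finset.sum_le_sum fun i _ =>
          four_mul_sq_mul_cube_le_add_indicator f hc (hf0 i) (hf1 i)
    _ = _ := by rw [Finset.sum_add_distrib, Finset.mul_sum]

/-- If 0 ≤ f ≤ 2^{-n} and ∑ f ≤ 1, then for
M := {x : 2^n f(x) > 1/2} we have
∑_{x ∈ M} f(x) ≥ (4 (4^n ∑_x f(x)³) − 1)/3. -/
theorem sum_on_large_values_ge {n : ℕ} (f : PhaseSpace n → ℝ)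
    (hf0 : ∀ x, 0 ≤ f x) (hf1 : ∀ x, f x ≤ 1 / 2 ^ n)
    (hsum : ∑ x, f x ≤ 1) :
    ∑ x, Set.indicator {x : PhaseSpace n | (1 : ℝ) / 2 < 2 ^ n * f x} f x
      ≥ (4 * (4 ^ n * ∑ x, (f x) ^ 3) - 1) / 3 := by
  have hscaled (x : PhaseSpace n) : (2 : ℝ) ^ n * f x ≤ 1 :=
    (le_div_iff₀' (by positivity)).mp (hf1 x)
  have hfour : (4 : ℝ) ^ n = (2 ^ n) ^ 2 := by
    rw [← pow_mul, mul_comm, pow_mul]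
    norm_num
  have hbound := four_mul_sq_mul_sum_cube_le f (by positivity) hf0 hscaled
  rw [← hfour] at hbound
  linarith
end
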